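/- arXiv:1608.01498 — 4 statements merged into one kernel-verified Lean document; each statement's English description precedes it below -/
import Mathlib

section
/- Let n ≥ 1 and let φ : EuclideanSpace ℝ (Fin n) → ℝ be a C² function which is superharmonic, i.e. Δφ(x) ≤ 0 for all x, and such that the function x ↦ ‖∇φ(x)‖ is integrable with respect to Lebesgue measure. Then φ is harmonic, i.e. Δφ(x) = 0 for all x. -/
open MeasureTheory

/-- The Euclidean Laplacian: the trace of the second derivative. -/
noncomputable def eLaplacian {n : ℕ} (f : EuclideanSpace ℝ (Fin n) → ℝ)
    (x : EuclideanSpace ℝ (Fin n)) : ℝ :=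
  ∑ i, iteratedFDeriv ℝ 2 f x ![EuclideanSpace.single i 1, EuclideanSpace.single i 1]

/-!
Put `f = -Δφ ≥ 0` and let `ψ_R(x) = b(x / R)` for a fixed bump `b` equal to `1` on the unit
ball, so that `‖∇ψ_R‖ ≤ M / R`. Integrating by parts,
`∫_{B_R} f ≤ ∫ ψ_R f = ∫ ⟪∇ψ_R, ∇φ⟫ ≤ (M / R) ∫ ‖∇φ‖`,
which tends to `0` as `R → ∞`. Hence the continuous nonnegative function `f` has zero integral
over every ball and vanishes identically.
-/

open Filter Set Metric InnerProductSpace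
open scoped Topology

section Calculus

variable {E F : Type*} [NormedAddCommGroup E] [NormedSpace ℝ E] [NormedAddCommGroup F]
  [NormedSpace ℝ F]

theorem fderiv_fderiv_apply_eq_iteratedFDeriv_two {φ : E → F} {x : E}
    (h : DifferentiableAt ℝ (fderiv ℝ φ) x) (v w : E) :
    fderiv ℝ (fun y => fderiv ℝ φ y w) x v = iteratedFDeriv ℝ 2 φ x ![v, w] := by
  rw [iteratedFDeriv_two_apply, fderiv_clm_apply h (differentiableAt_const w)]
  simp

theorem norm_fderiv_comp_smul_le {ψ : E → F} {M : ℝ} (hψ : ∀ x, ‖fderiv ℝ ψ x‖ ≤ M)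
    (c : ℝ) (x : E) : ‖fderiv ℝ (fun y => ψ (c • y)) x‖ ≤ |c| * M := by
  rw [fderiv_comp_smul, norm_smul, Real.norm_eq_abs]
  gcongr
  exact hψ _

theorem integral_mul_fderiv_eq_neg_fderiv_mul_of_hasCompactSupport [MeasurableSpace E]
    [BorelSpace E] [FiniteDimensional ℝ E] {μ : Measure E} [μ.IsAddHaarMeasure] {ψ g : E → ℝ}
    (hψ : ContDiff ℝ 1 ψ) (hψc : HasCompactSupport ψ) (hg : ContDiff ℝ 1 g) (v : E) :
    ∫ x, ψ x * fderiv ℝ g x v ∂μ = -∫ x, fderiv ℝ ψ x v * g x ∂μ :=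
  integral_mul_fderiv_eq_neg_fderiv_mul_of_integrable
    ((((hψ.continuous_fderiv one_ne_zero).clm_apply continuous_const).mul
      hg.continuous).integrable_of_hasCompactSupport (hψc.fderiv_apply ℝ v).mul_right)
    ((hψ.continuous.mul ((hg.continuous_fderiv one_ne_zero).clm_apply
      continuous_const)).integrable_of_hasCompactSupport hψc.mul_right)
    ((hψ.continuous.mul hg.continuous).integrable_of_hasCompactSupport hψc.mul_right)
    (fun x _ => hψ.differentiable one_ne_zero x) (fun x _ => hg.differentiable one_ne_zero x)

end Calculus

theorem exists_cutoff_family {E : Type*} [NormedAddCommGroup E] [NormedSpace ℝ E]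
    [FiniteDimensional ℝ E] [HasContDiffBump E] :
    ∃ M : ℝ, ∀ R > 0, ∃ ψ : E → ℝ, ContDiff ℝ 1 ψ ∧ HasCompactSupport ψ ∧ 0 ≤ ψ ∧
      EqOn ψ 1 (ball 0 R) ∧ ∀ x, ‖fderiv ℝ ψ x‖ ≤ M / R := by
  let b : ContDiffBump (0 : E) := ⟨1, 2, one_pos, one_lt_two⟩
  obtain ⟨M, hM⟩ := (b.hasCompactSupport.fderiv ℝ).exists_bound_of_continuous
    ((b.contDiff (n := 1)).continuous_fderiv one_ne_zero)
  refine ⟨M, fun R hR => ⟨fun x => b (R⁻¹ • x), b.contDiff.comp (contDiff_const_smul _),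
    b.hasCompactSupport.comp_smul (inv_ne_zero hR.ne'), fun _ => b.nonneg, fun x hx => ?_,
    fun x => ?_⟩⟩
  · refine b.one_of_mem_closedBall ?_
    rw [mem_closedBall_zero_iff, norm_smul, Real.norm_eq_abs, abs_inv, abs_of_pos hR,
      inv_mul_le_iff₀ hR, mul_one]
    exact (mem_ball_zero_iff.1 hx).le
  · simpa [abs_of_pos hR, div_eq_inv_mul] using norm_fderiv_comp_smul_le hM R⁻¹ x

section Integral

variable {X : Type*} [MeasurableSpace X] {μ : Measure X}

theorem setIntegral_le_integral_mul_of_eqOn_one {f ψ : X → ℝ} {s : Set X}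
    (hs : MeasurableSet s) (hf : 0 ≤ f) (hψ : 0 ≤ ψ) (hψs : EqOn ψ 1 s)
    (hψf : Integrable (fun x => ψ x * f x) μ) :
    ∫ x in s, f x ∂μ ≤ ∫ x, ψ x * f x ∂μ := by
  have hfs : IntegrableOn f s μ :=
    hψf.integrableOn.congr_fun (fun x hx => by simp [hψs hx]) hs
  rw [← integral_indicator hs]
  refine integral_mono (hfs.integrable_indicator hs) hψf fun x => ?_
  by_cases hx : x ∈ s
  · simp [hx, hψs hx]
  · simpa [hx] using mul_nonneg (hψ x) (hf x)

variable [TopologicalSpace X] [OpensMeasurableSpace X] [μ.IsOpenPosMeasure]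

theorem eqOn_zero_of_setIntegral_nonpos {f : X → ℝ} {U : Set X} (hU : IsOpen U)
    (hf : ContinuousOn f U) (hf0 : ∀ x ∈ U, 0 ≤ f x) (hfU : IntegrableOn f U μ)
    (hint : ∫ x in U, f x ∂μ ≤ 0) : EqOn f 0 U := by
  have hzero : ∫ x in U, f x ∂μ = 0 := le_antisymm hint (setIntegral_nonneg hU.measurableSet hf0)
  have hae := (setIntegral_eq_zero_iff_of_nonneg_ae
    ((ae_restrict_iff' hU.measurableSet).2 (ae_of_all μ hf0)) hfU).1 hzero
  exact Measure.eqOn_open_of_ae_eq hae hU hf continuousOn_const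

end Integral

theorem eq_zero_of_setIntegral_ball_le_div {E : Type*} [NormedAddCommGroup E] [ProperSpace E]
    [MeasurableSpace E] [OpensMeasurableSpace E] {μ : Measure E} [μ.IsOpenPosMeasure]
    [IsFiniteMeasureOnCompacts μ] {f : E → ℝ} (hf : Continuous f) (hf0 : 0 ≤ f) {C : ℝ}
    (hC : ∀ r R, 0 < R → r ≤ R → ∫ x in ball 0 r, f x ∂μ ≤ C / R) (x : E) : f x = 0 := by
  set r := ‖x‖ + 1
  have hr : 0 < r := by positivity
  have hlim : Tendsto (fun R => C / R) atTop (𝓝 0) := tendsto_const_nhds.div_atTop tendsto_id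
  have hball : ∫ x in ball 0 r, f x ∂μ ≤ 0 :=
    ge_of_tendsto hlim (eventually_atTop.2 ⟨r, fun R hR => hC r R (hr.trans_le hR) hR⟩)
  refine eqOn_zero_of_setIntegral_nonpos isOpen_ball hf.continuousOn (fun y _ => hf0 y)
    ((hf.continuousOn.integrableOn_compact (isCompact_closedBall 0 r)).mono_set
      ball_subset_closedBall) hball
    (mem_ball_zero_iff.2 (lt_add_one _))

theorem integral_inner_gradient_le {F : Type*} [NormedAddCommGroup F] [InnerProductSpace ℝ F]
    [CompleteSpace F] [MeasurableSpace F] {μ : Measure F} {φ ψ : F → ℝ} {C : ℝ}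
    (hψ : ∀ x, ‖fderiv ℝ ψ x‖ ≤ C) (hφ : Integrable (fun x => ‖gradient φ x‖) μ) :
    ∫ x, ⟪gradient ψ x, gradient φ x⟫_ℝ ∂μ ≤ C * ∫ x, ‖gradient φ x‖ ∂μ := by
  rw [← integral_const_mul]
  refine (Real.le_norm_self _).trans (norm_integral_le_of_norm_le (hφ.const_mul C) (ae_of_all _ ?_))
  intro x
  calc ‖⟪gradient ψ x, gradient φ x⟫_ℝ‖ ≤ ‖gradient ψ x‖ * ‖gradient φ x‖ := norm_inner_le_norm _ _
    _ ≤ C * ‖gradient φ x‖ := by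
      gcongr
      rw [gradient, LinearIsometryEquiv.norm_map]
      exact hψ x

section Euclidean

variable {n : ℕ}

local notation "𝔼" => EuclideanSpace ℝ (Fin n)

theorem eLaplacian_eq_sum_fderiv_fderiv {φ : 𝔼 → ℝ} (hφ : ContDiff ℝ 2 φ) (x : 𝔼) :
    eLaplacian φ x = ∑ i, fderiv ℝ (fun y => fderiv ℝ φ y (EuclideanSpace.single i 1)) x
      (EuclideanSpace.single i 1) := by
  have hd : DifferentiableAt ℝ (fderiv ℝ φ) x :=
    (hφ.fderiv_right (m := 1) le_rfl).differentiable one_ne_zero x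
  simp only [eLaplacian, fderiv_fderiv_apply_eq_iteratedFDeriv_two hd]

theorem continuous_eLaplacian {φ : 𝔼 → ℝ} (hφ : ContDiff ℝ 2 φ) : Continuous (eLaplacian φ) :=
  continuous_finsetSum _ fun i _ =>
    (ContinuousMultilinearMap.apply ℝ (fun _ : Fin 2 => 𝔼) ℝ
      ![EuclideanSpace.single i 1, EuclideanSpace.single i 1]).continuous.comp
      (hφ.continuous_iteratedFDeriv le_rfl)

theorem sum_fderiv_single_mul_fderiv_single (ψ φ : 𝔼 → ℝ) (x : 𝔼) :
    ∑ i, fderiv ℝ ψ x (EuclideanSpace.single i 1) * fderiv ℝ φ x (EuclideanSpace.single i 1) =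
      ⟪gradient ψ x, gradient φ x⟫_ℝ := by
  rw [← (EuclideanSpace.basisFun (Fin n) ℝ).sum_inner_mul_inner]
  simp only [EuclideanSpace.basisFun_apply, gradient, ← toDual_symm_apply, real_inner_comm]

theorem integral_mul_eLaplacian {φ ψ : 𝔼 → ℝ} (hφ : ContDiff ℝ 2 φ) (hψ : ContDiff ℝ 1 ψ)
    (hψc : HasCompactSupport ψ) :
    ∫ x, ψ x * eLaplacian φ x = -∫ x, ⟪gradient ψ x, gradient φ x⟫_ℝ := by
  set e : Fin n → 𝔼 := fun i => EuclideanSpace.single i 1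
  have hφ' : ∀ v : 𝔼, ContDiff ℝ 1 (fun y => fderiv ℝ φ y v) := fun v =>
    (hφ.fderiv_right (m := 1) le_rfl).clm_apply contDiff_const
  have hleft : ∀ i, Integrable (fun x => ψ x * fderiv ℝ (fun y => fderiv ℝ φ y (e i)) x (e i)) :=
    fun i => (hψ.continuous.mul (((hφ' (e i)).continuous_fderiv one_ne_zero).clm_apply
      continuous_const)).integrable_of_hasCompactSupport hψc.mul_right
  have hright : ∀ i, Integrable (fun x => fderiv ℝ ψ x (e i) * fderiv ℝ φ x (e i)) :=
    fun i => (((hψ.continuous_fderiv one_ne_zero).clm_apply continuous_const).mul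
      (hφ' (e i)).continuous).integrable_of_hasCompactSupport (hψc.fderiv_apply ℝ (e i)).mul_right
  simp only [eLaplacian_eq_sum_fderiv_fderiv hφ, Finset.mul_sum,
    ← sum_fderiv_single_mul_fderiv_single]
  rw [integral_finsetSum _ fun i _ => hleft i, integral_finsetSum _ fun i _ => hright i,
    ← Finset.sum_neg_distrib]
  exact Finset.sum_congr rfl fun i _ =>
    integral_mul_fderiv_eq_neg_fderiv_mul_of_hasCompactSupport hψ hψc (hφ' (e i)) (e i)

end Euclidean

theorem superharmonic_integrable_gradient_norm_is_harmonic_general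
    {n : ℕ} (φ : EuclideanSpace ℝ (Fin n) → ℝ)
    (hC2 : ContDiff ℝ 2 φ)
    (hsuper : ∀ x, eLaplacian φ x ≤ 0)
    (hgrad : Integrable (fun x => ‖gradient φ x‖) volume) :
    ∀ x, eLaplacian φ x = 0 := by
  obtain ⟨M, hM⟩ := exists_cutoff_family (E := EuclideanSpace ℝ (Fin n))
  have hf : Continuous fun x => -eLaplacian φ x := (continuous_eLaplacian hC2).neg
  have hf0 : 0 ≤ fun x => -eLaplacian φ x := fun x => neg_nonneg.2 (hsuper x)
  refine fun x => neg_eq_zero.1 (eq_zero_of_setIntegral_ball_le_div (μ := volume) hf hf0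
    (C := M * ∫ x, ‖gradient φ x‖) (fun r R hR hrR => ?_) x)
  obtain ⟨ψ, hψ, hψc, hψ0, hψ1, hψM⟩ := hM R hR
  calc ∫ x in ball 0 r, -eLaplacian φ x
      ≤ ∫ x, ψ x * -eLaplacian φ x :=
        setIntegral_le_integral_mul_of_eqOn_one measurableSet_ball hf0 hψ0
          (hψ1.mono (ball_subset_ball hrR))
          ((hψ.continuous.mul hf).integrable_of_hasCompactSupport hψc.mul_right)
    _ = ∫ x, ⟪gradient ψ x, gradient φ x⟫_ℝ := by
        simp only [mul_neg, integral_neg, integral_mul_eLaplacian hC2 hψ hψc, neg_neg]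
    _ ≤ M / R * ∫ x, ‖gradient φ x‖ := integral_inner_gradient_le hψM hgrad
    _ = M * (∫ x, ‖gradient φ x‖) / R := by ring

theorem superharmonic_integrable_gradient_norm_is_harmonic
    {n : ℕ} (hn : 1 ≤ n) (φ : EuclideanSpace ℝ (Fin n) → ℝ)
    (hC2 : ContDiff ℝ 2 φ)
    (hsuper : ∀ x, eLaplacian φ x ≤ 0)
    (hgrad : Integrable (fun x => ‖gradient φ x‖) volume) :
    ∀ x, eLaplacian φ x = 0 :=
  superharmonic_integrable_gradient_norm_is_harmonic_general φ hC2 hsuper hgrad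
end

section
/- Let n ≥ 1 and let u : EuclideanSpace ℝ (Fin n) → ℝ be a C² function which is subharmonic, i.e. Δu(x) ≥ 0 for all x, and such that the function x ↦ ‖∇u(x)‖ is integrable with respect to Lebesgue measure. Then u is harmonic, i.e. Δu(x) = 0 for all x. -/
open MeasureTheory

/-!
Δu is the divergence of the vector field ∇u, so by the divergence theorem the integral of Δu over
the cube [-R, R]ⁿ is bounded by the integral of |∇u| over its boundary. Integrating this bound in
R ∈ [0, ∞) gives at most 2n ∫ |∇u| < ∞. If Δu were positive somewhere, then, being nonnegative,
its integral over [-R, R]ⁿ would be bounded below by a positive constant for all large R, and the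
integral in R would diverge.
-/

open Set
open scoped ENNReal

section Cube

variable {n : ℕ}

def cube (n : ℕ) (R : ℝ) : Set (Fin n → ℝ) := Icc (fun _ => -R) (fun _ => R)

lemma cube_mono : Monotone (cube n) := fun _ _ h =>
  Icc_subset_Icc (fun _ => neg_le_neg h) fun _ => h

lemma ball_zero_subset_cube (R : ℝ) : Metric.ball (0 : Fin n → ℝ) R ⊆ cube n R := by
  intro y hy
  have h (j : Fin n) : |y j| ≤ R := (norm_le_pi_norm y j).trans (mem_ball_zero_iff.1 hy).le
  exact ⟨fun j => (abs_le.1 (h j)).1, fun j => (abs_le.1 (h j)).2⟩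

lemma exists_pos_le_setIntegral_cube {g : (Fin n → ℝ) → ℝ} (hg : Continuous g) (hg0 : 0 ≤ g)
    {x : Fin n → ℝ} (hx : 0 < g x) :
    ∃ R₀ c : ℝ, 0 < c ∧ ∀ R ≥ R₀, c ≤ ∫ y in cube n R, g y := by
  have hint (R : ℝ) : IntegrableOn g (cube n R) :=
    hg.continuousOn.integrableOn_compact isCompact_Icc
  have hg0' (R : ℝ) : 0 ≤ᵐ[volume.restrict (cube n R)] g := ae_of_all _ hg0
  refine ⟨‖x‖ + 1, _, ?_, fun R hR =>
    setIntegral_mono_set (hint R) (hg0' R) (cube_mono hR).eventuallyLE⟩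
  rw [setIntegral_pos_iff_support_of_nonneg_ae (hg0' _) (hint _)]
  have hU : IsOpen (Function.support g ∩ Metric.ball 0 (‖x‖ + 1)) :=
    hg.isOpen_support.inter Metric.isOpen_ball
  exact (hU.measure_pos volume ⟨x, hx.ne', by simp⟩).trans_le
    (measure_mono (inter_subset_inter_right _ (ball_zero_subset_cube _)))

end Cube

section Faces

variable {n : ℕ}

lemma measurePreserving_insertNth (i : Fin (n + 1)) :
    MeasurePreserving fun p : ℝ × (Fin n → ℝ) => (i.insertNth p.1 p.2 : Fin (n + 1) → ℝ) :=
  (measurePreserving_piFinSuccAbove (α := fun _ => ℝ) (fun _ => volume) i).symm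

lemma lintegral_lintegral_insertNth {g : (Fin (n + 1) → ℝ) → ℝ≥0∞} (hg : AEMeasurable g)
    (i : Fin (n + 1)) : ∫⁻ t, ∫⁻ y, g (i.insertNth t y) = ∫⁻ x, g x := by
  have hp := measurePreserving_insertNth (n := n) i
  rw [← hp.lintegral_comp_emb
      (MeasurableEquiv.piFinSuccAbove (fun _ => ℝ) i).symm.measurableEmbedding,
    Measure.volume_eq_prod]
  exact (lintegral_prod _ (hg.comp_quasiMeasurePreserving hp.quasiMeasurePreserving)).symm

lemma aemeasurable_lintegral_insertNth {g : (Fin (n + 1) → ℝ) → ℝ≥0∞} (hg : AEMeasurable g)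
    (i : Fin (n + 1)) : AEMeasurable fun t => ∫⁻ y, g (i.insertNth t y) :=
  (hg.comp_quasiMeasurePreserving
    (measurePreserving_insertNth i).quasiMeasurePreserving).lintegral_prod_right'

lemma lintegral_sum_faces {f : Fin (n + 1) → (Fin (n + 1) → ℝ) → ℝ}
    (hf : ∀ i, AEStronglyMeasurable (f i)) :
    ∫⁻ t, ∑ i, ((∫⁻ y, ‖f i (i.insertNth t y)‖ₑ) + ∫⁻ y, ‖f i (i.insertNth (-t) y)‖ₑ) =
      2 * ∑ i, ∫⁻ x, ‖f i x‖ₑ := by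
  have hF (i) := aemeasurable_lintegral_insertNth (hf i).enorm i
  have hF' (i) : AEMeasurable fun t => ∫⁻ y, ‖f i (i.insertNth (-t) y)‖ₑ :=
    (hF i).comp_quasiMeasurePreserving
      (Measure.measurePreserving_neg (volume : Measure ℝ)).quasiMeasurePreserving
  rw [lintegral_finsetSum' _ fun i _ => by fun_prop, Finset.mul_sum]
  refine Finset.sum_congr rfl fun i _ => ?_
  rw [lintegral_add_left' (hF i),
    lintegral_neg_eq_self fun t => ∫⁻ y, ‖f i (i.insertNth t y)‖ₑ,
    lintegral_lintegral_insertNth (hf i).enorm, two_mul]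

end Faces

section Divergence

variable {n : ℕ}

noncomputable def divergence (f : Fin n → (Fin n → ℝ) → ℝ) (y : Fin n → ℝ) : ℝ :=
  ∑ i, fderiv ℝ (f i) y (Pi.single i 1)

lemma continuous_divergence {f : Fin n → (Fin n → ℝ) → ℝ} (hf : ∀ i, ContDiff ℝ 1 (f i)) :
    Continuous (divergence f) :=
  continuous_finsetSum _ fun i _ =>
    ((hf i).continuous_fderiv one_ne_zero).clm_apply continuous_const

lemma enorm_setIntegral_cube_divergence_le {f : Fin (n + 1) → (Fin (n + 1) → ℝ) → ℝ}
    (hf : ∀ i, ContDiff ℝ 1 (f i)) {R : ℝ} (hR : 0 ≤ R) :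
    ‖∫ y in cube (n + 1) R, divergence f y‖ₑ ≤
      ∑ i, ((∫⁻ y, ‖f i (i.insertNth R y)‖ₑ) + ∫⁻ y, ‖f i (i.insertNth (-R) y)‖ₑ) := by
  have hface (s : Set (Fin n → ℝ)) (g : (Fin n → ℝ) → ℝ) : ‖∫ y in s, g y‖ₑ ≤ ∫⁻ y, ‖g y‖ₑ :=
    (enorm_integral_le_lintegral_enorm _).trans (setLIntegral_le_lintegral _ _)
  unfold cube divergence
  rw [integral_divergence_of_hasFDerivAt_off_countable' _ _
    (fun _ => neg_le_self hR) f (fun i y => fderiv ℝ (f i) y) ∅ countable_empty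
    (fun i => (hf i).continuous.continuousOn)
    (fun y _ i => ((hf i).differentiable one_ne_zero y).hasFDerivAt)
    ((continuous_divergence hf).continuousOn.integrableOn_compact isCompact_Icc)]
  exact (enorm_sum_le _ _).trans (Finset.sum_le_sum fun i _ =>
    enorm_sub_le.trans (add_le_add (hface _ _) (hface _ _)))

theorem divergence_eq_zero_of_nonneg_of_integrable {f : Fin n → (Fin n → ℝ) → ℝ}
    (hf : ∀ i, ContDiff ℝ 1 (f i)) (hint : ∀ i, Integrable (f i)) (hdiv : 0 ≤ divergence f) :
    divergence f = 0 := by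
  cases n with
  | zero => funext y; simp [divergence]
  | succ n =>
  by_contra hne
  obtain ⟨x, hx⟩ : ∃ x, 0 < divergence f x := by
    contrapose! hne
    exact funext fun x => le_antisymm (hne x) (hdiv x)
  obtain ⟨R₀, c, hc, hR₀⟩ := exists_pos_le_setIntegral_cube (continuous_divergence hf) hdiv hx
  set W : ℝ → ℝ≥0∞ := fun t =>
    ∑ i, ((∫⁻ y, ‖f i (i.insertNth t y)‖ₑ) + ∫⁻ y, ‖f i (i.insertNth (-t) y)‖ₑ)
  have hW : ∀ t ∈ Ici (max R₀ 0), ENNReal.ofReal c ≤ W t := fun t ht =>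
    calc ENNReal.ofReal c ≤ ‖∫ y in cube (n + 1) t, divergence f y‖ₑ := by
          rw [Real.enorm_eq_ofReal_abs]
          exact ENNReal.ofReal_le_ofReal ((hR₀ t (le_of_max_le_left ht)).trans (le_abs_self _))
      _ ≤ W t := enorm_setIntegral_cube_divergence_le hf (le_of_max_le_right ht)
  have hW_top : ∞ ≤ ∫⁻ t, W t :=
    calc ∞ = ∫⁻ _ in Ici (max R₀ 0), ENNReal.ofReal c := by
          rw [setLIntegral_const, Real.volume_Ici, ENNReal.mul_top (ENNReal.ofReal_pos.2 hc).ne']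
      _ ≤ ∫⁻ t in Ici (max R₀ 0), W t := setLIntegral_mono' measurableSet_Ici hW
      _ ≤ ∫⁻ t, W t := setLIntegral_le_lintegral _ _
  rw [lintegral_sum_faces fun i => (hint i).aestronglyMeasurable] at hW_top
  exact (ENNReal.mul_lt_top ENNReal.ofNat_lt_top
    (ENNReal.sum_lt_top.2 fun i _ => (hint i).hasFiniteIntegral)).not_ge hW_top

end Divergence

lemma abs_fderiv_apply_le_norm_gradient {F : Type*} [NormedAddCommGroup F]
    [InnerProductSpace ℝ F] [CompleteSpace F] (u : F → ℝ) (x v : F) :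
    |fderiv ℝ u x v| ≤ ‖gradient u x‖ * ‖v‖ := by
  rw [← InnerProductSpace.toDual_symm_apply]
  exact abs_real_inner_le_norm _ _

section CoordGradient

open WithLp

variable {n : ℕ} {u : EuclideanSpace ℝ (Fin n) → ℝ}

/-- `∇u` moved to `Fin n → ℝ`, the space on which Mathlib's divergence theorem is stated. -/
noncomputable def coordGradient (u : EuclideanSpace ℝ (Fin n) → ℝ) :
    Fin n → (Fin n → ℝ) → ℝ :=
  fun i y => fderiv ℝ u (toLp 2 y) (EuclideanSpace.single i 1)

lemma contDiff_coordGradient (hu : ContDiff ℝ 2 u) (i : Fin n) :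
    ContDiff ℝ 1 (coordGradient u i) :=
  ((hu.fderiv_right (by norm_num)).comp (EuclideanSpace.equiv (Fin n) ℝ).symm.contDiff).clm_apply
    contDiff_const

lemma divergence_coordGradient (hu : ContDiff ℝ 2 u) (y : Fin n → ℝ) :
    divergence (coordGradient u) y = eLaplacian u (toLp 2 y) := by
  set L := (EuclideanSpace.equiv (Fin n) ℝ).symm
  have hu' : Differentiable ℝ (fderiv ℝ u) :=
    (hu.fderiv_right (by norm_num)).differentiable one_ne_zero
  refine Finset.sum_congr rfl fun i _ => ?_
  have hd : HasFDerivAt (coordGradient u i)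
      ((ContinuousLinearMap.apply ℝ ℝ (EuclideanSpace.single i 1)).comp
        ((fderiv ℝ (fderiv ℝ u) (L y)).comp (L : (Fin n → ℝ) →L[ℝ] _))) y :=
    (ContinuousLinearMap.apply ℝ ℝ (EuclideanSpace.single i (1 : ℝ))).hasFDerivAt.comp y
      ((hu' _).hasFDerivAt.comp y L.hasFDerivAt)
  rw [hd.fderiv, iteratedFDeriv_two_apply]
  rfl

lemma integrable_coordGradient (hu : ContDiff ℝ 1 u)
    (hgrad : Integrable fun x => ‖gradient u x‖) (i : Fin n) :
    Integrable (coordGradient u i) := by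
  have hgrad' : Integrable fun y : Fin n → ℝ => ‖gradient u (toLp 2 y)‖ :=
    ((PiLp.volume_preserving_toLp (Fin n)).integrable_comp_emb
      (MeasurableEquiv.toLp 2 _).measurableEmbedding).2 hgrad
  refine hgrad'.mono' ?_ (ae_of_all _ fun y => ?_)
  · exact ((hu.continuous_fderiv one_ne_zero).comp (PiLp.continuous_toLp 2 _)).clm_apply
      continuous_const |>.aestronglyMeasurable
  · simpa [coordGradient] using abs_fderiv_apply_le_norm_gradient u (toLp 2 y) (EuclideanSpace.single i 1)

end CoordGradient

theorem subharmonic_integrable_gradient_norm_is_harmonic_general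
    {n : ℕ} (u : EuclideanSpace ℝ (Fin n) → ℝ)
    (hC2 : ContDiff ℝ 2 u)
    (hsub : ∀ x, 0 ≤ eLaplacian u x)
    (hgrad : Integrable (fun x => ‖gradient u x‖) volume) :
    ∀ x, eLaplacian u x = 0 := by
  have h := divergence_eq_zero_of_nonneg_of_integrable (contDiff_coordGradient hC2)
    (integrable_coordGradient (hC2.of_le (by norm_num)) hgrad)
    (fun y => (divergence_coordGradient hC2 y).symm ▸ hsub _)
  intro x
  simpa [divergence_coordGradient hC2] using congrFun h (WithLp.ofLp x)

theorem subharmonic_integrable_gradient_norm_is_harmonic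
    {n : ℕ} (hn : 1 ≤ n) (u : EuclideanSpace ℝ (Fin n) → ℝ)
    (hC2 : ContDiff ℝ 2 u)
    (hsub : ∀ x, 0 ≤ eLaplacian u x)
    (hgrad : Integrable (fun x => ‖gradient u x‖) volume) :
    ∀ x, eLaplacian u x = 0 :=
  subharmonic_integrable_gradient_norm_is_harmonic_general u hC2 hsub hgrad
end

section
/- Let n ≥ 3 and let σ : EuclideanSpace ℝ (Fin n) → ℝ be a C² function satisfying the pointwise inequality 2(n−1)·Δσ(x) + (n−1)(n−2)·‖∇σ(x)‖² ≤ 0 for all x, and suppose x ↦ ‖∇σ(x)‖ is integrable with respect to Lebesgue measure. Then σ is constant. -/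
open MeasureTheory

/-!
Dividing the hypothesis by `2(n - 1)` gives `c ‖∇σ‖² ≤ -Δσ` with `c = (n - 2)/2 > 0`. Multiply by a
bump `φ_R` that equals `1` on the ball of radius `R`, is supported in the ball of radius `2R` and
has `‖∇φ_R‖ ≤ C/R`, and integrate by parts:
`c ∫_{B_R} ‖∇σ‖² ≤ ∫ φ_R (-Δσ) = ∫ ⟪∇φ_R, ∇σ⟫ ≤ (C/R) ‖∇σ‖_{L¹}`.
Letting `R → ∞` forces `∇σ = 0`.
-/

open Metric Filter InnerProductSpace Laplacian
open scoped Gradient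

section Gradient

variable {E : Type*} [NormedAddCommGroup E] [InnerProductSpace ℝ E] [CompleteSpace E]

theorem norm_gradient (f : E → ℝ) (x : E) : ‖∇ f x‖ = ‖fderiv ℝ f x‖ :=
  (toDual ℝ E).symm.norm_map _

theorem ContDiff.continuous_gradient {f : E → ℝ} {n : WithTop ℕ∞} (hf : ContDiff ℝ n f)
    (hn : n ≠ 0) : Continuous (∇ f) :=
  (toDual ℝ E).symm.continuous.comp (hf.continuous_fderiv hn)

theorem OrthonormalBasis.inner_gradient_eq_sum {ι : Type*} [Fintype ι]
    (b : OrthonormalBasis ι ℝ E) (f g : E → ℝ) (x : E) :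
    ⟪∇ f x, ∇ g x⟫_ℝ = ∑ i, fderiv ℝ f x (b i) * fderiv ℝ g x (b i) := by
  rw [← b.sum_inner_mul_inner]
  refine Finset.sum_congr rfl fun i _ ↦ ?_
  rw [inner_gradient_left, real_inner_comm, inner_gradient_left]

end Gradient

section Laplacian

variable {E : Type*} [NormedAddCommGroup E] [InnerProductSpace ℝ E] [FiniteDimensional ℝ E]

theorem OrthonormalBasis.laplacian_eq_sum {ι : Type*} [Fintype ι] (b : OrthonormalBasis ι ℝ E)
    {f : E → ℝ} (hf : ContDiff ℝ 2 f) (x : E) :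
    Δ f x = ∑ i, fderiv ℝ (fun y ↦ fderiv ℝ f y (b i)) x (b i) := by
  rw [laplacian_eq_iteratedFDeriv_orthonormalBasis f b]
  refine Finset.sum_congr rfl fun i _ ↦ ?_
  rw [iteratedFDeriv_two_apply, fderiv_clm_apply
    ((hf.fderiv_right one_add_one_eq_two.le).differentiable one_ne_zero x)
    (differentiableAt_const _)]
  simp

theorem ContDiff.continuous_laplacian {f : E → ℝ} (hf : ContDiff ℝ 2 f) : Continuous (Δ f) := by
  rw [laplacian_eq_iteratedFDeriv_stdOrthonormalBasis]
  have := hf.continuous_iteratedFDeriv le_rfl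
  fun_prop

end Laplacian

section Green

variable {E : Type*} [NormedAddCommGroup E] [InnerProductSpace ℝ E] [FiniteDimensional ℝ E]
  [MeasurableSpace E] [BorelSpace E] {μ : Measure E} [μ.IsAddHaarMeasure]

theorem integral_mul_laplacian_eq_neg_integral_inner_gradient {φ f : E → ℝ}
    (hφ : ContDiff ℝ 1 φ) (hφc : HasCompactSupport φ) (hf : ContDiff ℝ 2 f) :
    ∫ x, φ x * Δ f x ∂μ = -∫ x, ⟪∇ φ x, ∇ f x⟫_ℝ ∂μ := by
  let b := stdOrthonormalBasis ℝ E
  have hf' : ContDiff ℝ 1 (fderiv ℝ f) := hf.fderiv_right one_add_one_eq_two.le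
  have hφ' : Continuous (fderiv ℝ φ) := hφ.continuous_fderiv one_ne_zero
  have hg : ∀ i, ContDiff ℝ 1 fun y ↦ fderiv ℝ f y (b i) := fun i ↦ hf'.clm_apply contDiff_const
  have hint_left : ∀ i, Integrable (fun x ↦ fderiv ℝ φ x (b i) * fderiv ℝ f x (b i)) μ :=
    fun i ↦ (hφ'.clm_apply continuous_const).mul (hg i).continuous
      |>.integrable_of_hasCompactSupport (hφc.fderiv_apply (𝕜 := ℝ) _).mul_right
  have hint_right : ∀ i,
      Integrable (fun x ↦ φ x * fderiv ℝ (fun y ↦ fderiv ℝ f y (b i)) x (b i)) μ :=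
    fun i ↦ hφ.continuous.mul (((hg i).continuous_fderiv one_ne_zero).clm_apply continuous_const)
      |>.integrable_of_hasCompactSupport hφc.mul_right
  calc ∫ x, φ x * Δ f x ∂μ
      = ∑ i, ∫ x, φ x * fderiv ℝ (fun y ↦ fderiv ℝ f y (b i)) x (b i) ∂μ := by
        simp_rw [b.laplacian_eq_sum hf, Finset.mul_sum]
        exact integral_finsetSum _ fun i _ ↦ hint_right i
    _ = ∑ i, -∫ x, fderiv ℝ φ x (b i) * fderiv ℝ f x (b i) ∂μ :=
        Finset.sum_congr rfl fun i _ ↦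
          integral_mul_fderiv_eq_neg_fderiv_mul_of_integrable (hint_left i) (hint_right i)
            (hφ.continuous.mul (hg i).continuous |>.integrable_of_hasCompactSupport hφc.mul_right)
            (fun x _ ↦ hφ.differentiable one_ne_zero x)
            (fun x _ ↦ (hg i).differentiable one_ne_zero x)
    _ = -∫ x, ⟪∇ φ x, ∇ f x⟫_ℝ ∂μ := by
        simp_rw [b.inner_gradient_eq_sum]
        rw [integral_finsetSum _ fun i _ ↦ hint_left i, Finset.sum_neg_distrib]

end Green

namespace ContDiffBump

variable {E : Type*} [NormedAddCommGroup E] [NormedSpace ℝ E] [HasContDiffBump E]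

theorem apply_eq_apply_smul {f f₀ : ContDiffBump (0 : E)}
    (h : f.rOut / f.rIn = f₀.rOut / f₀.rIn) (x : E) : f x = f₀ ((f₀.rIn / f.rIn) • x) := by
  rw [ContDiffBump.apply, ContDiffBump.apply, h, sub_zero, sub_zero, smul_smul,
    mul_div_assoc', inv_mul_cancel₀ f₀.rIn_pos.ne', one_div]

theorem exists_norm_fderiv_le_div_rIn [FiniteDimensional ℝ E] (f₀ : ContDiffBump (0 : E)) :
    ∃ C, ∀ f : ContDiffBump (0 : E), f.rOut / f.rIn = f₀.rOut / f₀.rIn →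
      ∀ x, ‖fderiv ℝ f x‖ ≤ C / f.rIn := by
  obtain ⟨C₀, hC₀⟩ := (f₀.hasCompactSupport.fderiv (𝕜 := ℝ)).exists_bound_of_continuous
    (f₀.contDiff.continuous_fderiv one_ne_zero)
  refine ⟨f₀.rIn * C₀, fun f h x ↦ ?_⟩
  have hpos : 0 < f₀.rIn / f.rIn := div_pos f₀.rIn_pos f.rIn_pos
  rw [show (f : E → ℝ) = fun y ↦ f₀ ((f₀.rIn / f.rIn) • y) from funext (apply_eq_apply_smul h),
    fderiv_comp_smul, norm_smul, Real.norm_of_nonneg hpos.le, mul_div_right_comm]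
  gcongr
  exact hC₀ _

end ContDiffBump

theorem eq_zero_of_setIntegral_closedBall_le_div {X : Type*} [MetricSpace X] [ProperSpace X]
    [MeasurableSpace X] [BorelSpace X] {μ : Measure X} [μ.IsOpenPosMeasure]
    [IsFiniteMeasureOnCompacts μ] {x₀ : X} {g : X → ℝ} (hg : Continuous g) (hg0 : 0 ≤ g)
    {K : ℝ} (h : ∀ R > 0, ∫ x in closedBall x₀ R, g x ∂μ ≤ K / R) : g = 0 := by
  funext x
  have hr : (0 : ℝ) < dist x x₀ + 1 := by positivity
  set r := dist x x₀ + 1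
  have hint : ∀ s, IntegrableOn g (closedBall x₀ s) μ :=
    fun s ↦ hg.continuousOn.integrableOn_compact (isCompact_closedBall x₀ s)
  have hle : ∫ y in closedBall x₀ r, g y ∂μ ≤ 0 := by
    refine ge_of_tendsto (tendsto_const_nhds (x := K) |>.div_atTop tendsto_id) ?_
    filter_upwards [eventually_ge_atTop r] with R hR
    exact (setIntegral_mono_set (hint R) (ae_of_all _ hg0)
      (closedBall_subset_closedBall hR).eventuallyLE).trans (h R (hr.trans_le hR))
  have hzero : g =ᵐ[μ.restrict (closedBall x₀ r)] 0 :=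
    (setIntegral_eq_zero_iff_of_nonneg_ae (ae_of_all _ hg0) (hint r)).1
      (le_antisymm hle (setIntegral_nonneg measurableSet_closedBall fun y _ ↦ hg0 y))
  exact Measure.eqOn_open_of_ae_eq
    (ae_restrict_of_ae_restrict_of_subset ball_subset_closedBall hzero) isOpen_ball
    hg.continuousOn continuousOn_const (mem_ball.2 (by linarith))

section Estimate

variable {E : Type*} [NormedAddCommGroup E] [InnerProductSpace ℝ E] [FiniteDimensional ℝ E]
  [MeasurableSpace E] [BorelSpace E] {μ : Measure E} [μ.IsAddHaarMeasure]
  {c : ℝ} {σ : E → ℝ}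

theorem integral_mul_sq_norm_gradient_le (hσ : ContDiff ℝ 2 σ)
    (hsub : ∀ x, c * ‖∇ σ x‖ ^ 2 ≤ -Δ σ x) (hgrad : Integrable (fun x ↦ ‖∇ σ x‖) μ)
    {φ : E → ℝ} (hφ : ContDiff ℝ 1 φ) (hφc : HasCompactSupport φ) (hφ0 : 0 ≤ φ)
    {K : ℝ} (hφK : ∀ x, ‖∇ φ x‖ ≤ K) :
    c * ∫ x, φ x * ‖∇ σ x‖ ^ 2 ∂μ ≤ K * ∫ x, ‖∇ σ x‖ ∂μ := by
  have hσ' : Continuous (∇ σ) := hσ.continuous_gradient two_ne_zero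
  have hinner_le : ∀ x, ⟪∇ φ x, ∇ σ x⟫_ℝ ≤ K * ‖∇ σ x‖ := fun x ↦
    (real_inner_le_norm _ _).trans (mul_le_mul_of_nonneg_right (hφK x) (norm_nonneg _))
  have hinner_int : Integrable (fun x ↦ ⟪∇ φ x, ∇ σ x⟫_ℝ) μ :=
    (hgrad.const_mul K).mono'
      ((hφ.continuous_gradient one_ne_zero).inner hσ').aestronglyMeasurable
      (ae_of_all _ fun x ↦ (abs_real_inner_le_norm _ _).trans
        (mul_le_mul_of_nonneg_right (hφK x) (norm_nonneg _)))
  calc c * ∫ x, φ x * ‖∇ σ x‖ ^ 2 ∂μ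
      = ∫ x, φ x * (c * ‖∇ σ x‖ ^ 2) ∂μ := by
        rw [← integral_const_mul]
        exact integral_congr_ae (ae_of_all _ fun x ↦ by ring)
    _ ≤ ∫ x, φ x * -Δ σ x ∂μ :=
        integral_mono
          (hφ.continuous.mul (continuous_const.mul (hσ'.norm.pow 2))
            |>.integrable_of_hasCompactSupport hφc.mul_right)
          (hφ.continuous.mul hσ.continuous_laplacian.neg
            |>.integrable_of_hasCompactSupport hφc.mul_right)
          fun x ↦ mul_le_mul_of_nonneg_left (hsub x) (hφ0 x)
    _ = ∫ x, ⟪∇ φ x, ∇ σ x⟫_ℝ ∂μ := by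
        simp_rw [mul_neg]
        rw [integral_neg, integral_mul_laplacian_eq_neg_integral_inner_gradient hφ hφc hσ, neg_neg]
    _ ≤ ∫ x, K * ‖∇ σ x‖ ∂μ := integral_mono hinner_int (hgrad.const_mul K) hinner_le
    _ = K * ∫ x, ‖∇ σ x‖ ∂μ := integral_const_mul _ _

theorem gradient_eq_zero_of_mul_sq_norm_gradient_le_neg_laplacian (hc : 0 < c)
    (hσ : ContDiff ℝ 2 σ) (hsub : ∀ x, c * ‖∇ σ x‖ ^ 2 ≤ -Δ σ x)
    (hgrad : Integrable (fun x ↦ ‖∇ σ x‖) μ) : ∇ σ = 0 := by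
  obtain ⟨C, hC⟩ :=
    ContDiffBump.exists_norm_fderiv_le_div_rIn (⟨1, 2, one_pos, one_lt_two⟩ : ContDiffBump (0 : E))
  set I := ∫ x, ‖∇ σ x‖ ∂μ
  suffices h : (fun x ↦ ‖∇ σ x‖ ^ 2) = 0 by
    funext x
    simpa using congrFun h x
  refine eq_zero_of_setIntegral_closedBall_le_div (μ := μ) (x₀ := 0) (K := C * I / c)
    ((hσ.continuous_gradient two_ne_zero).norm.pow 2) (fun x ↦ by positivity) fun R hR ↦ ?_
  let φ : ContDiffBump (0 : E) := ⟨R, 2 * R, hR, by linarith⟩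
  have hφK : ∀ x, ‖∇ φ x‖ ≤ C / R := fun x ↦
    (norm_gradient _ _).trans_le (hC φ (by simp [φ, hR.ne']) x)
  have henergy := integral_mul_sq_norm_gradient_le hσ hsub hgrad φ.contDiff φ.hasCompactSupport
    (fun _ ↦ φ.nonneg) hφK
  calc ∫ x in closedBall 0 R, ‖∇ σ x‖ ^ 2 ∂μ
      = ∫ x in closedBall 0 R, φ x * ‖∇ σ x‖ ^ 2 ∂μ :=
        setIntegral_congr_fun measurableSet_closedBall fun x hx ↦ by
          rw [φ.one_of_mem_closedBall hx, one_mul]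
    _ ≤ ∫ x, φ x * ‖∇ σ x‖ ^ 2 ∂μ :=
        setIntegral_le_integral
          (φ.continuous.mul ((hσ.continuous_gradient two_ne_zero).norm.pow 2)
            |>.integrable_of_hasCompactSupport φ.hasCompactSupport.mul_right)
          (ae_of_all _ fun x ↦ mul_nonneg φ.nonneg (sq_nonneg _))
    _ ≤ C * I / c / R := by
        rw [div_div, le_div_iff₀ (mul_pos hc hR)]
        calc (∫ x, φ x * ‖∇ σ x‖ ^ 2 ∂μ) * (c * R)
            = (c * ∫ x, φ x * ‖∇ σ x‖ ^ 2 ∂μ) * R := by ring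
          _ ≤ C / R * I * R := mul_le_mul_of_nonneg_right henergy hR.le
          _ = C * I := by field_simp

end Estimate

theorem eLaplacian_eq_laplacian {n : ℕ} (f : EuclideanSpace ℝ (Fin n) → ℝ) :
    eLaplacian f = Δ f := by
  rw [laplacian_eq_iteratedFDeriv_orthonormalBasis f (EuclideanSpace.basisFun (Fin n) ℝ)]
  funext x
  simp [eLaplacian]

theorem conformal_scalar_ineq_L1_gradient_constant
    {n : ℕ} (hn : 3 ≤ n) (σ : EuclideanSpace ℝ (Fin n) → ℝ)
    (hC2 : ContDiff ℝ 2 σ)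
    (hineq : ∀ x, 2 * ((n : ℝ) - 1) * eLaplacian σ x
      + ((n : ℝ) - 1) * ((n : ℝ) - 2) * ‖gradient σ x‖ ^ 2 ≤ 0)
    (hgrad : Integrable (fun x => ‖gradient σ x‖) volume) :
    ∃ c : ℝ, ∀ x, σ x = c := by
  have hn' : (3 : ℝ) ≤ n := by exact_mod_cast hn
  have hsub : ∀ x, ((n : ℝ) - 2) / 2 * ‖∇ σ x‖ ^ 2 ≤ -Δ σ x := fun x ↦ by
    have h := hineq x
    rw [eLaplacian_eq_laplacian] at h
    rw [div_mul_eq_mul_div, div_le_iff₀ two_pos]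
    nlinarith
  have hgrad0 := gradient_eq_zero_of_mul_sq_norm_gradient_le_neg_laplacian
    (by linarith : 0 < ((n : ℝ) - 2) / 2) hC2 hsub hgrad
  have hfderiv : ∀ x, fderiv ℝ σ x = 0 := fun x ↦ by
    rw [← toDual_gradient, hgrad0, Pi.zero_apply, map_zero]
  exact ⟨σ 0, fun x ↦ is_const_of_fderiv_eq_zero (hC2.differentiable two_ne_zero) hfderiv x 0⟩
end

section
/- Let n ≥ 3 and let σ : EuclideanSpace ℝ (Fin n) → ℝ be a C² function with σ(x) ≤ 0 for all x, satisfying the pointwise inequality 2(n−1)·Δσ(x) + (n−1)(n−2)·‖∇σ(x)‖² ≤ 0 for all x, and suppose ∫ |σ|^p < ∞ for some real p with 1 < p < ∞. Then σ is identically zero. -/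
/-!
Put `c = (n - 2) / 2`. The hypothesis says `Δσ + c ‖∇σ‖² ≤ 0`, which is exactly what makes
`w = 1 - exp (c σ)` subharmonic; moreover `0 ≤ w ≤ 1` and `w ≤ c |σ|`. For an integer `m ≥ p`
the power `v = w ^ m` is again subharmonic, and `v² ≤ w ^ p ≤ (c |σ|) ^ p` is integrable.
Testing `Δv ≥ 0` against `χ² v` for a cutoff `χ` equal to `1` on the ball of radius `R` with
`‖∇χ‖ ≲ 1 / R` gives Caccioppoli's inequality `∫_{B_R} ‖∇v‖² ≲ ‖v‖₂² / R²`; letting `R → ∞`,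
`v` is constant, hence zero since `ℝⁿ` has infinite volume. Thus `exp (c σ) = 1`.
-/

open MeasureTheory

theorem norm_gradient_eq_norm_fderiv {F : Type*} [NormedAddCommGroup F] [InnerProductSpace ℝ F]
    [CompleteSpace F] (f : F → ℝ) (x : F) : ‖gradient f x‖ = ‖fderiv ℝ f x‖ := by
  simp [gradient]

section NormedSpace

variable {E F : Type*} [NormedAddCommGroup E] [NormedSpace ℝ E]

theorem fderiv_fderiv_apply_const [NormedAddCommGroup F] [NormedSpace ℝ F] {v : E → F} {x : E}
    (hv : DifferentiableAt ℝ (fderiv ℝ v) x) (a b : E) :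
    fderiv ℝ (fun y => fderiv ℝ v y a) x b = fderiv ℝ (fderiv ℝ v) x b a := by
  simp [fderiv_clm_apply hv (differentiableAt_const a)]

theorem integrable_fderiv_mul_fderiv [MeasurableSpace E] [BorelSpace E] {μ : Measure E}
    [IsFiniteMeasureOnCompacts μ] {φ v : E → ℝ} (hφ : ContDiff ℝ 1 φ) (hφc : HasCompactSupport φ)
    (hv : ContDiff ℝ 1 v) (a b : E) :
    Integrable (fun x => fderiv ℝ φ x a * fderiv ℝ v x b) μ :=
  (by fun_prop : Continuous _).integrable_of_hasCompactSupport
    ((hφc.fderiv (𝕜 := ℝ)).comp_left (g := fun L : E →L[ℝ] ℝ => L a) (by simp)).mul_right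

variable (E) in
theorem exists_cutoff_norm_fderiv_le [FiniteDimensional ℝ E] :
    ∃ K, ∀ R > 0, ∃ χ : E → ℝ, ContDiff ℝ 1 χ ∧ HasCompactSupport χ ∧
      (∀ x ∈ Metric.closedBall 0 R, χ x = 1) ∧ ∀ x, ‖fderiv ℝ χ x‖ ≤ K / R := by
  let ψ : ContDiffBump (0 : E) := ⟨1, 2, one_pos, one_lt_two⟩
  obtain ⟨K, hK⟩ := ((ψ.contDiff (n := 1)).continuous_fderiv one_ne_zero)
    |>.bounded_above_of_compact_support (ψ.hasCompactSupport.fderiv (𝕜 := ℝ))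
  refine ⟨K, fun R hR => ⟨fun x => ψ (R⁻¹ • x), ψ.contDiff.comp (contDiff_const_smul _),
    ψ.hasCompactSupport.comp_smul (inv_ne_zero hR.ne'), fun x hx => ?_, fun x => ?_⟩⟩
  · refine ψ.one_of_mem_closedBall ?_
    rw [mem_closedBall_zero_iff, norm_smul, norm_inv, Real.norm_of_nonneg hR.le]
    rw [mem_closedBall_zero_iff] at hx
    exact inv_mul_le_one_of_le₀ hx hR.le
  · rw [fderiv_comp_smul, norm_smul, norm_inv, Real.norm_of_nonneg hR.le, div_eq_inv_mul]
    exact mul_le_mul_of_nonneg_left (hK _) (inv_nonneg.2 hR.le)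

end NormedSpace

section Euclidean

variable {n : ℕ}

local notation "𝐞" i:max => EuclideanSpace.single i (1 : ℝ)

theorem sum_sq_apply_single_eq_norm_sq (L : EuclideanSpace ℝ (Fin n) →L[ℝ] ℝ) :
    ∑ i, L (𝐞 i) ^ 2 = ‖L‖ ^ 2 := by
  set g := (InnerProductSpace.toDual ℝ (EuclideanSpace ℝ (Fin n))).symm L
  have hg : ∀ i, L (𝐞 i) = g i := fun i => by
    rw [← InnerProductSpace.toDual_symm_apply, EuclideanSpace.inner_single_right]; simp [g]
  rw [← (InnerProductSpace.toDual ℝ _).symm.norm_map L, EuclideanSpace.norm_eq,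
    Real.sq_sqrt (by positivity)]
  simp [hg, g]

theorem eLaplacian_eq_sum_fderiv_fderiv_s6 (f : EuclideanSpace ℝ (Fin n) → ℝ)
    (x : EuclideanSpace ℝ (Fin n)) :
    eLaplacian f x = ∑ i, fderiv ℝ (fderiv ℝ f) x (𝐞 i) (𝐞 i) := by
  simp [eLaplacian, iteratedFDeriv_two_apply]

theorem eLaplacian_comp {G : ℝ → ℝ} {f : EuclideanSpace ℝ (Fin n) → ℝ} (hG : ContDiff ℝ 2 G)
    (hf : ContDiff ℝ 2 f) (x : EuclideanSpace ℝ (Fin n)) :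
    eLaplacian (fun y => G (f y)) x =
      deriv G (f x) * eLaplacian f x + deriv (deriv G) (f x) * ‖fderiv ℝ f x‖ ^ 2 := by
  have hG' : Differentiable ℝ (deriv G) := (hG.iterate_deriv' 1 1).differentiable one_ne_zero
  have hf' : Differentiable ℝ (fderiv ℝ f) :=
    (hf.fderiv_right (m := 1) le_rfl).differentiable one_ne_zero
  have hfderiv : fderiv ℝ (fun y => G (f y)) = fun y => deriv G (f y) • fderiv ℝ f y :=
    funext fun y => ((hG.differentiable two_ne_zero (f y)).hasDerivAt.comp_hasFDerivAt y
      (hf.differentiable two_ne_zero y).hasFDerivAt).fderiv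
  have hfderiv2 : fderiv ℝ (fun y => deriv G (f y) • fderiv ℝ f y) x =
      deriv G (f x) • fderiv ℝ (fderiv ℝ f) x +
        (deriv (deriv G) (f x) • fderiv ℝ f x).smulRight (fderiv ℝ f x) :=
    (((hG' (f x)).hasDerivAt.comp_hasFDerivAt x
      (hf.differentiable two_ne_zero x).hasFDerivAt).smul (hf' x).hasFDerivAt).fderiv
  simp only [eLaplacian_eq_sum_fderiv_fderiv_s6, hfderiv, hfderiv2, ← sum_sq_apply_single_eq_norm_sq,
    Finset.mul_sum, ← Finset.sum_add_distrib]
  refine Finset.sum_congr rfl fun i _ => ?_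
  simp only [add_apply, ContinuousLinearMap.smulRight_apply, smul_apply, smul_eq_mul]
  ring

theorem eLaplacian_pow_nonneg {w : EuclideanSpace ℝ (Fin n) → ℝ} (hw : ContDiff ℝ 2 w) (m : ℕ)
    {x : EuclideanSpace ℝ (Fin n)} (hw₀ : 0 ≤ w x) (hΔ : 0 ≤ eLaplacian w x) :
    0 ≤ eLaplacian (fun y => w y ^ m) x := by
  have h₂ : deriv (deriv fun t : ℝ => t ^ m) (w x) = m * (m - 1) * w x ^ (m - 2) := by
    rw [show deriv (deriv fun t : ℝ => t ^ m) = deriv^[2] (fun t : ℝ => t ^ m) from rfl,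
      iter_deriv_pow]
    simp [Finset.prod_range_succ]
  have hm : (0 : ℝ) ≤ m * (m - 1) := by
    rcases m with _ | m <;> push_cast <;> nlinarith
  rw [eLaplacian_comp (G := fun t => t ^ m) (by fun_prop) hw, h₂, deriv_pow_field]
  positivity

theorem eLaplacian_one_sub_exp_nonneg {σ : EuclideanSpace ℝ (Fin n) → ℝ} (hσ : ContDiff ℝ 2 σ)
    {c : ℝ} (hc : 0 ≤ c) {x : EuclideanSpace ℝ (Fin n)}
    (h : eLaplacian σ x + c * ‖fderiv ℝ σ x‖ ^ 2 ≤ 0) :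
    0 ≤ eLaplacian (fun y => 1 - Real.exp (c * σ y)) x := by
  have hderiv : ∀ a : ℝ,
      deriv (fun t => a * Real.exp (c * t)) = fun t => a * c * Real.exp (c * t) :=
    fun a => funext fun t => by
      simpa [mul_comm, mul_assoc, mul_left_comm] using
        (((hasDerivAt_id t).const_mul c).exp.const_mul a).deriv
  have h₁ : deriv (fun t => 1 - Real.exp (c * t)) = fun t => -c * Real.exp (c * t) := by
    simpa using hderiv (-1)
  rw [eLaplacian_comp (G := fun t => 1 - Real.exp (c * t)) (by fun_prop) hσ, h₁, hderiv]
  beta_reduce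
  linarith [mul_nonneg (mul_nonneg hc (Real.exp_pos (c * σ x)).le) (neg_nonneg.2 h)]

theorem integral_mul_eLaplacian_s6 {φ v : EuclideanSpace ℝ (Fin n) → ℝ} (hφ : ContDiff ℝ 1 φ)
    (hφc : HasCompactSupport φ) (hv : ContDiff ℝ 2 v) :
    ∫ x, φ x * eLaplacian v x = -∫ x, ∑ i, fderiv ℝ φ x (𝐞 i) * fderiv ℝ v x (𝐞 i) := by
  have hDv : ContDiff ℝ 1 (fderiv ℝ v) := hv.fderiv_right le_rfl
  have hD2 := fun x => fderiv_fderiv_apply_const (hDv.differentiable one_ne_zero x)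
  have h₁ : ∀ i, Integrable (fun x => φ x * fderiv ℝ (fderiv ℝ v) x (𝐞 i) (𝐞 i)) := fun i =>
    (hφ.continuous.mul (by fun_prop)).integrable_of_hasCompactSupport hφc.mul_right
  have h₂ := integrable_fderiv_mul_fderiv (μ := volume) hφ hφc (hv.of_le one_le_two)
  simp only [eLaplacian_eq_sum_fderiv_fderiv_s6, Finset.mul_sum]
  rw [integral_finsetSum _ fun i _ => h₁ i, integral_finsetSum _ fun i _ => h₂ _ _,
    ← Finset.sum_neg_distrib]
  refine Finset.sum_congr rfl fun i _ => ?_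
  simp_rw [← hD2]
  refine integral_mul_fderiv_eq_neg_fderiv_mul_of_integrable (h₂ _ _) ?_
    ((hφ.continuous.mul (by fun_prop)).integrable_of_hasCompactSupport hφc.mul_right)
    (fun x _ => (hφ.differentiable one_ne_zero).differentiableAt)
    (fun x _ => ((hDv.differentiable one_ne_zero).clm_apply (differentiable_const _)) x)
  simpa [hD2] using h₁ i

theorem sq_mul_norm_fderiv_sq_le {v χ : EuclideanSpace ℝ (Fin n) → ℝ}
    {x : EuclideanSpace ℝ (Fin n)} (hv : DifferentiableAt ℝ v x) (hχ : DifferentiableAt ℝ χ x) :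
    χ x ^ 2 * ‖fderiv ℝ v x‖ ^ 2 ≤ 4 * (v x ^ 2 * ‖fderiv ℝ χ x‖ ^ 2) +
      2 * ∑ i, fderiv ℝ (fun y => χ y ^ 2 * v y) x (𝐞 i) * fderiv ℝ v x (𝐞 i) := by
  have hDφ : fderiv ℝ (fun y => χ y ^ 2 * v y) x =
      (2 * χ x * v x) • fderiv ℝ χ x + χ x ^ 2 • fderiv ℝ v x := by
    refine ((hχ.hasFDerivAt.pow 2).mul hv.hasFDerivAt).fderiv.trans ?_
    ext a
    simp only [Nat.add_one_sub_one, pow_one, nsmul_eq_mul, Nat.cast_ofNat, add_apply, smul_apply,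
      smul_eq_mul]
    ring
  simp only [← sum_sq_apply_single_eq_norm_sq, Finset.mul_sum, ← Finset.sum_add_distrib, hDφ]
  refine Finset.sum_le_sum fun i _ => ?_
  simp only [add_apply, smul_apply, smul_eq_mul]
  nlinarith [sq_nonneg (χ x * fderiv ℝ v x (𝐞 i) + 2 * v x * fderiv ℝ χ x (𝐞 i))]

theorem integral_sq_mul_norm_fderiv_sq_le {v χ : EuclideanSpace ℝ (Fin n) → ℝ}
    (hv : ContDiff ℝ 2 v) (hv₀ : ∀ x, 0 ≤ v x) (hΔ : ∀ x, 0 ≤ eLaplacian v x)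
    (hχ : ContDiff ℝ 1 χ) (hχc : HasCompactSupport χ) :
    ∫ x, χ x ^ 2 * ‖fderiv ℝ v x‖ ^ 2 ≤ 4 * ∫ x, v x ^ 2 * ‖fderiv ℝ χ x‖ ^ 2 := by
  have hv₁ : ContDiff ℝ 1 v := hv.of_le one_le_two
  have hχ2c : HasCompactSupport fun x => χ x ^ 2 :=
    hχc.comp_left (g := fun t : ℝ => t ^ 2) (by simp)
  have hφ : ContDiff ℝ 1 fun x => χ x ^ 2 * v x := (hχ.pow 2).mul hv₁
  have hint₁ : Integrable (fun x => χ x ^ 2 * ‖fderiv ℝ v x‖ ^ 2) :=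
    (by fun_prop : Continuous _).integrable_of_hasCompactSupport hχ2c.mul_right
  have hint₂ : Integrable (fun x => v x ^ 2 * ‖fderiv ℝ χ x‖ ^ 2) :=
    (by fun_prop : Continuous _).integrable_of_hasCompactSupport
      ((hχc.fderiv (𝕜 := ℝ)).comp_left (g := fun L => ‖L‖ ^ 2) (by simp)).mul_left
  have hint₃ := integrable_finsetSum Finset.univ fun i _ =>
    integrable_fderiv_mul_fderiv (μ := volume) hφ hχ2c.mul_right hv₁ (𝐞 i) (𝐞 i)
  have hΔφ : 0 ≤ ∫ x, χ x ^ 2 * v x * eLaplacian v x :=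
    integral_nonneg fun x => mul_nonneg (mul_nonneg (sq_nonneg _) (hv₀ x)) (hΔ x)
  calc ∫ x, χ x ^ 2 * ‖fderiv ℝ v x‖ ^ 2
      ≤ ∫ x, (4 * (v x ^ 2 * ‖fderiv ℝ χ x‖ ^ 2) +
          2 * ∑ i, fderiv ℝ (fun y => χ y ^ 2 * v y) x (𝐞 i) * fderiv ℝ v x (𝐞 i)) :=
        integral_mono hint₁ ((hint₂.const_mul 4).add (hint₃.const_mul 2)) fun x =>
          sq_mul_norm_fderiv_sq_le (hv₁.differentiable one_ne_zero x)
            (hχ.differentiable one_ne_zero x)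
    _ = 4 * (∫ x, v x ^ 2 * ‖fderiv ℝ χ x‖ ^ 2) - 2 * ∫ x, χ x ^ 2 * v x * eLaplacian v x := by
        rw [integral_add (hint₂.const_mul 4) (hint₃.const_mul 2), integral_const_mul,
          integral_const_mul, integral_mul_eLaplacian_s6 hφ hχ2c.mul_right hv]
        ring
    _ ≤ 4 * ∫ x, v x ^ 2 * ‖fderiv ℝ χ x‖ ^ 2 := by linarith

theorem exists_setIntegral_ball_norm_fderiv_sq_le {v : EuclideanSpace ℝ (Fin n) → ℝ}
    (hv : ContDiff ℝ 2 v) (hv₀ : ∀ x, 0 ≤ v x) (hΔ : ∀ x, 0 ≤ eLaplacian v x)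
    (hint : Integrable (fun x => v x ^ 2)) :
    ∃ C, ∀ r R, 0 < R → r ≤ R → ∫ x in Metric.ball 0 r, ‖fderiv ℝ v x‖ ^ 2 ≤ C / R ^ 2 := by
  obtain ⟨K, hK⟩ := exists_cutoff_norm_fderiv_le (EuclideanSpace ℝ (Fin n))
  refine ⟨4 * K ^ 2 * ∫ x, v x ^ 2, fun r R hR hrR => ?_⟩
  obtain ⟨χ, hχ, hχc, hχ₁, hDχ⟩ := hK R hR
  have hDv : Continuous (fderiv ℝ v) := hv.continuous_fderiv two_ne_zero
  have hint₁ : Integrable (fun x => χ x ^ 2 * ‖fderiv ℝ v x‖ ^ 2) :=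
    (by fun_prop : Continuous _).integrable_of_hasCompactSupport
      (hχc.comp_left (g := fun t : ℝ => t ^ 2) (by simp)).mul_right
  calc ∫ x in Metric.ball 0 r, ‖fderiv ℝ v x‖ ^ 2
      = ∫ x in Metric.ball 0 r, χ x ^ 2 * ‖fderiv ℝ v x‖ ^ 2 := by
        refine setIntegral_congr_fun measurableSet_ball fun x hx => ?_
        rw [hχ₁ x (Metric.ball_subset_closedBall (Metric.ball_subset_ball hrR hx)), one_pow,
          one_mul]
    _ ≤ ∫ x, χ x ^ 2 * ‖fderiv ℝ v x‖ ^ 2 :=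
        setIntegral_le_integral hint₁ (.of_forall fun x => by positivity)
    _ ≤ 4 * ∫ x, v x ^ 2 * ‖fderiv ℝ χ x‖ ^ 2 :=
        integral_sq_mul_norm_fderiv_sq_le hv hv₀ hΔ hχ hχc
    _ ≤ 4 * ∫ x, v x ^ 2 * (K / R) ^ 2 :=
        mul_le_mul_of_nonneg_left (integral_mono_of_nonneg (.of_forall fun x => by positivity)
          (hint.mul_const _) (.of_forall fun x => mul_le_mul_of_nonneg_left
            (pow_le_pow_left₀ (norm_nonneg _) (hDχ x) 2) (sq_nonneg _))) four_pos.le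
    _ = 4 * K ^ 2 * (∫ x, v x ^ 2) / R ^ 2 := by
        rw [integral_mul_const]
        field_simp

theorem fderiv_eq_zero_of_subharmonic_of_integrable_sq {v : EuclideanSpace ℝ (Fin n) → ℝ}
    (hv : ContDiff ℝ 2 v) (hv₀ : ∀ x, 0 ≤ v x) (hΔ : ∀ x, 0 ≤ eLaplacian v x)
    (hint : Integrable (fun x => v x ^ 2)) (x : EuclideanSpace ℝ (Fin n)) :
    fderiv ℝ v x = 0 := by
  obtain ⟨C, hC⟩ := exists_setIntegral_ball_norm_fderiv_sq_le hv hv₀ hΔ hint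
  set r := ‖x‖ + 1
  have hQ : Continuous fun y => ‖fderiv ℝ v y‖ ^ 2 :=
    (hv.continuous_fderiv two_ne_zero).norm.pow 2
  have hle : ∫ y in Metric.ball 0 r, ‖fderiv ℝ v y‖ ^ 2 ≤ 0 :=
    ge_of_tendsto (tendsto_const_nhds.div_atTop (Filter.tendsto_pow_atTop two_ne_zero))
      ((Filter.eventually_ge_atTop r).mono fun R hR =>
        hC r R ((by positivity : 0 < ‖x‖ + 1).trans_le hR) hR)
  have hzero : (fun y => ‖fderiv ℝ v y‖ ^ 2) =ᵐ[volume.restrict (Metric.ball 0 r)] 0 :=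
    (setIntegral_eq_zero_iff_of_nonneg_ae (.of_forall fun y => by positivity)
      ((hQ.continuousOn.integrableOn_compact (isCompact_closedBall 0 r)).mono_set
        Metric.ball_subset_closedBall)).1
      (le_antisymm hle (setIntegral_nonneg measurableSet_ball fun y _ => by positivity))
  simpa using Measure.eqOn_open_of_ae_eq hzero Metric.isOpen_ball hQ.continuousOn
    continuousOn_const (mem_ball_zero_iff.2 (lt_add_one ‖x‖))

theorem eq_zero_of_subharmonic_of_integrable_sq [NeZero n] {v : EuclideanSpace ℝ (Fin n) → ℝ}
    (hv : ContDiff ℝ 2 v) (hv₀ : ∀ x, 0 ≤ v x) (hΔ : ∀ x, 0 ≤ eLaplacian v x)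
    (hint : Integrable (fun x => v x ^ 2)) (x : EuclideanSpace ℝ (Fin n)) : v x = 0 := by
  have hconst : ∀ y, v y = v x := fun y => is_const_of_fderiv_eq_zero
    (hv.differentiable two_ne_zero) (fderiv_eq_zero_of_subharmonic_of_integrable_sq hv hv₀ hΔ hint)
    y x
  simp only [hconst] at hint
  rcases integrable_const_iff.1 hint with h | h
  · exact pow_eq_zero_iff two_ne_zero |>.1 h
  · exact absurd (measure_univ_of_isAddLeftInvariant (volume : Measure (EuclideanSpace ℝ (Fin n))))
      (measure_ne_top _ _)

end Euclidean

theorem sq_pow_one_sub_exp_le {c t p : ℝ} {m : ℕ} (hc : 0 ≤ c) (ht : t ≤ 0) (hp : 0 ≤ p)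
    (hpm : p ≤ 2 * m) : ((1 - Real.exp (c * t)) ^ m) ^ 2 ≤ c ^ p * |t| ^ p := by
  have hct : c * t ≤ 0 := mul_nonpos_of_nonneg_of_nonpos hc ht
  have hw₀ : 0 ≤ 1 - Real.exp (c * t) := sub_nonneg.2 (Real.exp_le_one_iff.2 hct)
  have hw₁ : 1 - Real.exp (c * t) ≤ 1 := sub_le_self _ (Real.exp_pos _).le
  have hwct : 1 - Real.exp (c * t) ≤ c * |t| := by
    rw [abs_of_nonpos ht]
    linarith [Real.add_one_le_exp (c * t)]
  calc ((1 - Real.exp (c * t)) ^ m) ^ 2 = (1 - Real.exp (c * t)) ^ ((2 * m : ℕ) : ℝ) := by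
        rw [Real.rpow_natCast, pow_mul']
    _ ≤ (1 - Real.exp (c * t)) ^ p :=
        Real.rpow_le_rpow_of_exponent_ge' hw₀ hw₁ hp (by exact_mod_cast hpm)
    _ ≤ (c * |t|) ^ p := Real.rpow_le_rpow hw₀ hwct hp
    _ = c ^ p * |t| ^ p := Real.mul_rpow hc (abs_nonneg t)

theorem conformal_scalar_ineq_nonpos_Lp_zero
    {n : ℕ} (hn : 3 ≤ n) (σ : EuclideanSpace ℝ (Fin n) → ℝ)
    (hC2 : ContDiff ℝ 2 σ)
    (hneg : ∀ x, σ x ≤ 0)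
    (hineq : ∀ x, 2 * ((n : ℝ) - 1) * eLaplacian σ x
      + ((n : ℝ) - 1) * ((n : ℝ) - 2) * ‖gradient σ x‖ ^ 2 ≤ 0)
    (p : ℝ) (hp : 1 < p)
    (hLp : Integrable (fun x => |σ x| ^ p) volume) :
    ∀ x, σ x = 0 := by
  have : NeZero n := ⟨by omega⟩
  have hn' : (3 : ℝ) ≤ n := by exact_mod_cast hn
  set c : ℝ := ((n : ℝ) - 2) / 2
  have hc : 0 < c := div_pos (by linarith) two_pos
  have hσ : ∀ x, eLaplacian σ x + c * ‖fderiv ℝ σ x‖ ^ 2 ≤ 0 := fun x => by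
    have h := hineq x
    rw [norm_gradient_eq_norm_fderiv] at h
    refine nonpos_of_mul_nonpos_right (a := 2 * ((n : ℝ) - 1)) ?_ (by linarith)
    simp only [c]
    linarith
  set m := ⌈p⌉₊
  set w := fun x => 1 - Real.exp (c * σ x)
  have hw : ContDiff ℝ 2 w := by fun_prop
  have hw₀ : ∀ x, 0 ≤ w x := fun x =>
    sub_nonneg.2 (Real.exp_le_one_iff.2 (mul_nonpos_of_nonneg_of_nonpos hc.le (hneg x)))
  have hΔv : ∀ x, 0 ≤ eLaplacian (fun y => w y ^ m) x := fun x =>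
    eLaplacian_pow_nonneg hw m (hw₀ x) (eLaplacian_one_sub_exp_nonneg hC2 hc.le (hσ x))
  have hint : Integrable fun x => (w x ^ m) ^ 2 :=
    (hLp.const_mul (c ^ p)).mono' ((hw.continuous.pow m).pow 2).aestronglyMeasurable
      (.of_forall fun x => by
        rw [Real.norm_of_nonneg (sq_nonneg _)]
        exact sq_pow_one_sub_exp_le hc.le (hneg x) (by linarith) (by linarith [Nat.le_ceil p]))
  have hwm : ∀ x, w x ^ m = 0 :=
    eq_zero_of_subharmonic_of_integrable_sq (hw.pow m) (fun x => pow_nonneg (hw₀ x) m) hΔv hint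
  intro x
  have hwx : Real.exp (c * σ x) = 1 :=
    (sub_eq_zero.1 (pow_eq_zero_iff (Nat.ceil_pos.2 (by linarith)).ne' |>.1 (hwm x))).symm
  simpa [hc.ne'] using hwx
end
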